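/- Let m ≥ 1 be an integer, δ > -m, and define p_k(δ) = (2 + δ/m)·Γ(k+δ)Γ(m+2+δ+δ/m) / (Γ(m+δ)Γ(k+3+δ+δ/m)) for integers k ≥ m. Then Σ_{k=m}^∞ p_k(δ) = 1. -/

import Mathlib

/-!
With `a = m + δ` and `b = m + 2 + δ + δ / m` we have `p_{m+k}(δ) = (Γ b / Γ a) · (b - a) Γ(a + k) / Γ(b + 1 + k)`.
By `Γ(x + 1) = x Γ(x)` the last factor is `f k - f (k + 1)` for `f k = Γ(a + k) / Γ(b + k)`, so the
series telescopes to `f 0 = Γ a / Γ b` once `f k → 0`. That holds because `b - a = 2 + δ / m > 1`: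
as `Γ` increases on `[2, ∞)`, `f k ≤ Γ(b - 1 + k) / Γ(b + k) = 1 / (b - 1 + k)` for large `k`.
-/

open Real

/-- The limiting degree distribution of the affine preferential attachment
model with out-degree `m` and parameter `δ`, for degrees `k ≥ m`. -/
noncomputable def paDegreeDist (m : ℕ) (δ : ℝ) (k : ℕ) : ℝ :=
  (2 + δ / m) * (Real.Gamma ((k : ℝ) + δ) * Real.Gamma ((m : ℝ) + 2 + δ + δ / m)) /
    (Real.Gamma ((m : ℝ) + δ) * Real.Gamma ((k : ℝ) + 3 + δ + δ / m))

open Filter Topology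

theorem hasSum_sub_succ_of_antitone {f : ℕ → ℝ} {l : ℝ} (hf : Antitone f)
    (hl : Tendsto f atTop (𝓝 l)) : HasSum (fun n ↦ f n - f (n + 1)) (f 0 - l) := by
  rw [hasSum_iff_tendsto_nat_of_nonneg fun n ↦ sub_nonneg.2 (hf n.le_succ)]
  simp only [Finset.sum_range_sub']
  exact tendsto_const_nhds.sub hl

namespace Real

variable {a b : ℝ}

theorem Gamma_add_nat_div_sub_succ (ha : 0 < a) (hb : 0 < b) (k : ℕ) :
    Gamma (a + k) / Gamma (b + k) - Gamma (a + (k + 1)) / Gamma (b + (k + 1)) =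
      (b - a) * Gamma (a + k) / Gamma (b + 1 + k) := by
  have hak : a + k ≠ 0 := by positivity
  have hbk : 0 < b + k := by positivity
  have hΓ : Gamma (b + k) ≠ 0 := (Gamma_pos_of_pos hbk).ne'
  rw [← add_assoc, ← add_assoc, add_right_comm b 1, Gamma_add_one hak,
    Gamma_add_one hbk.ne']
  field_simp
  ring

theorem Gamma_add_nat_div_Gamma_add_nat_antitone (ha : 0 < a) (hab : a ≤ b) :
    Antitone fun n : ℕ ↦ Gamma (a + n) / Gamma (b + n) := by
  refine antitone_nat_of_succ_le fun n ↦ sub_nonneg.1 ?_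
  rw [Nat.cast_succ, Gamma_add_nat_div_sub_succ ha (ha.trans_le hab)]
  have := Gamma_pos_of_pos (show 0 < a + n by positivity)
  have := Gamma_pos_of_pos (show 0 < b + 1 + n by linarith [n.cast_nonneg (α := ℝ)])
  have : 0 ≤ b - a := sub_nonneg.2 hab
  positivity

theorem tendsto_Gamma_add_nat_div_Gamma_add_nat (ha : 0 < a) (hab : a + 1 ≤ b) :
    Tendsto (fun n : ℕ ↦ Gamma (a + n) / Gamma (b + n)) atTop (𝓝 0) := by
  have hb : 0 < b - 1 := by linarith
  have hbound : ∀ n : ℕ, 2 ≤ a + n → Gamma (a + n) / Gamma (b + n) ≤ (b - 1 + n)⁻¹ := by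
    intro n hn
    have hpos : 0 < b - 1 + n := by positivity
    have hmono : Gamma (a + n) ≤ Gamma (b - 1 + n) :=
      Gamma_strictMonoOn_Ici.monotoneOn hn (by simp only [Set.mem_Ici]; linarith) (by linarith)
    have hsucc : Gamma (b + n) = (b - 1 + n) * Gamma (b - 1 + n) := by
      rw [← Gamma_add_one hpos.ne']
      ring_nf
    rw [hsucc, div_le_iff₀ (by positivity [Gamma_pos_of_pos hpos]), inv_mul_cancel_left₀ hpos.ne']
    exact hmono
  refine squeeze_zero' (Eventually.of_forall fun n ↦ ?_) ?_
    (tendsto_inv_atTop_zero.comp (tendsto_atTop_add_const_left _ (b - 1) tendsto_natCast_atTop_atTop))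
  · have := Gamma_pos_of_pos (show 0 < a + n by positivity)
    have := Gamma_pos_of_pos (show 0 < b + n by linarith [n.cast_nonneg (α := ℝ)])
    positivity
  · filter_upwards [(tendsto_natCast_atTop_atTop (R := ℝ)).eventually_ge_atTop (2 - a)] with n hn
    exact hbound n (by linarith)

theorem hasSum_Gamma_add_nat_div_Gamma_add_nat (ha : 0 < a) (hab : a + 1 ≤ b) :
    HasSum (fun k : ℕ ↦ (b - a) * Gamma (a + k) / Gamma (b + 1 + k)) (Gamma a / Gamma b) := by
  have hb : 0 < b := by linarith
  have := hasSum_sub_succ_of_antitone (Gamma_add_nat_div_Gamma_add_nat_antitone ha (by linarith))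
    (tendsto_Gamma_add_nat_div_Gamma_add_nat ha hab)
  simpa [Gamma_add_nat_div_sub_succ ha hb] using this

end Real

theorem paDegreeDist_tsum_eq_one (m : ℕ) (hm : 1 ≤ m) (δ : ℝ) (hδ : -(m : ℝ) < δ) :
    ∑' k : ℕ, paDegreeDist m δ (m + k) = 1 := by
  have hm₀ : (0 : ℝ) < m := by exact_mod_cast hm
  have hδm : -1 < δ / m := by rwa [lt_div_iff₀ hm₀, neg_one_mul]
  set a : ℝ := m + δ
  set b : ℝ := m + 2 + δ + δ / m
  have ha : 0 < a := by linarith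
  have hab : a + 1 ≤ b := by linarith
  have hterm (k : ℕ) : paDegreeDist m δ (m + k) =
      Gamma b / Gamma a * ((b - a) * Gamma (a + k) / Gamma (b + 1 + k)) := by
    rw [paDegreeDist, Nat.cast_add, show (m + k : ℝ) + δ = a + k by ring,
      show (m + k : ℝ) + 3 + δ + δ / m = b + 1 + k by ring]
    ring
  have hsum := (hasSum_Gamma_add_nat_div_Gamma_add_nat ha hab).mul_left (Gamma b / Gamma a)
  rw [funext hterm, hsum.tsum_eq, div_mul_div_cancel₀ (Gamma_pos_of_pos ha).ne',
    div_self (Gamma_pos_of_pos (by linarith)).ne']
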